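/- Let J be a strongly stable ideal in S and I an ideal in the J-marked family Mf(J), i.e., N(J) is a K-basis of S/I. Then x_0 is a non-zero divisor on S/I^sat, the satiety of I is at most the satiety of J, and if J is saturated then I is saturated. Consequently (I : x_0^∞) = I^sat. -/

import Mathlib

open MvPolynomial

namespace Paper

/-- Monomials (exponent vectors) in `N` variables. -/
abbrev Mon (N : ℕ) := Fin N →₀ ℕ

variable {N : ℕ}

/-- Total degree of a monomial. -/
def mdeg (u : Mon N) : ℕ := u.sum fun _ e => e

/-- `BorelStep a b` : `b` is obtained from `a` by one increasing elementary move,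
i.e. `x^a · x_j = x^b · x_i` with `i < j`. -/
def BorelStep (a b : Mon N) : Prop :=
  ∃ i j : Fin N, i < j ∧ a + Finsupp.single j 1 = b + Finsupp.single i 1

/-- `BorelLt a b` : `a <_B b`, i.e. `b` is obtained from `a` by a nonempty
sequence of increasing elementary moves. -/
def BorelLt (a b : Mon N) : Prop := Relation.TransGen BorelStep a b

/-- A (combinatorially encoded) monomial ideal: a set of monomials closed
under multiplication by monomials. -/
def MonIdeal (J : Set (Mon N)) : Prop := ∀ u ∈ J, ∀ d : Mon N, u + d ∈ J

/-- A strongly stable monomial ideal. -/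
def StronglyStable (J : Set (Mon N)) : Prop :=
  MonIdeal J ∧ ∀ b ∈ J, ∀ a, BorelLt b a → a ∈ J

/-- The minimal monomial basis `B_J` of a monomial ideal. -/
def MinBasis (J : Set (Mon N)) : Set (Mon N) :=
  {u | u ∈ J ∧ ∀ v ∈ J, v ≤ u → v = u}

/-- `min(x^a) ≥ max(x^h)`. -/
def StarCond (a h : Mon N) : Prop :=
  ∀ i j : Fin N, a i ≠ 0 → h j ≠ 0 → j ≤ i


variable (K : Type) [Field K]

/-- The monomial `x^u` as a polynomial. -/
noncomputable def mono {N : ℕ} (u : Mon N) : MvPolynomial (Fin N) K :=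
  MvPolynomial.monomial u (1 : K)

/-- The (actual) monomial ideal of `S` spanned by a set of monomials. -/
noncomputable def idealOf {N : ℕ} (J : Set (Mon N)) : Ideal (MvPolynomial (Fin N) K) :=
  Ideal.span (mono K '' J)

/-- The irrelevant maximal ideal `(x_0, …, x_n)`. -/
noncomputable def irrel (N : ℕ) : Ideal (MvPolynomial (Fin N) K) :=
  Ideal.span (Set.range MvPolynomial.X)

/-- The saturation `I^sat = ⋃_j (I : (x_0,…,x_n)^j)`. -/
noncomputable def satIdeal {N : ℕ} (I : Ideal (MvPolynomial (Fin N) K)) :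
    Ideal (MvPolynomial (Fin N) K) :=
  ⨆ k : ℕ, Submodule.colon I ((irrel K N ^ k : Ideal (MvPolynomial (Fin N) K)) : Set (MvPolynomial (Fin N) K))

/-- The satiety of a homogeneous ideal: the smallest `m` such that
`I_t = (I^sat)_t` for all `t ≥ m`. -/
noncomputable def satiety {N : ℕ} (I : Ideal (MvPolynomial (Fin N) K)) : ℕ :=
  sInf {m | ∀ t, m ≤ t → ∀ p : MvPolynomial (Fin N) K,
    p.IsHomogeneous t → (p ∈ I ↔ p ∈ satIdeal K I)}

/-- The saturation of a combinatorial monomial ideal. -/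
def msat {N : ℕ} (J : Set (Mon N)) : Set (Mon N) :=
  {u | ∃ k : ℕ, ∀ d : Mon N, mdeg d = k → u + d ∈ J}

/-- The satiety of a combinatorial monomial ideal. -/
noncomputable def msatiety {N : ℕ} (J : Set (Mon N)) : ℕ :=
  sInf {m | ∀ u : Mon N, m ≤ mdeg u → (u ∈ J ↔ u ∈ msat J)}

/-- `I ∈ Mf(J)`: `I` is homogeneous and the monomials outside `J` form a
`K`-vector-space basis of `S/I`. -/
def MemMf {N : ℕ} (J : Set (Mon N)) (I : Ideal (MvPolynomial (Fin N) K)) : Prop :=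
  (∀ p ∈ I, ∀ d : ℕ, MvPolynomial.homogeneousComponent d p ∈ I) ∧
  LinearIndependent K
    (fun u : {u : Mon N // u ∉ J} => Ideal.Quotient.mk I (mono K u.1)) ∧
  ⊤ ≤ Submodule.span K
    (Set.range fun u : {u : Mon N // u ∉ J} => Ideal.Quotient.mk I (mono K u.1))


/-! In degrees `t ≥ sat(J)` strong stability gives `x^u x_0 ∈ J → x^u ∈ J`: all the
`x^u x_i` then lie in `J`, so `x^u ∈ J^sat`, which agrees with `J` there. Hence multiplication
by `x_0` sends polynomials of degree `t` supported on `N(J)` to polynomials supported on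
`N(J)`. As these normal forms are linearly independent modulo `I`, `x_0` is a nonzerodivisor
on `(S/I)_t`. So `x_0^k p ∈ I` forces every homogeneous component of `p` of degree `≥ sat(J)`
into `I`, i.e. `(I : x_0^∞) ⊆ (I : (x_0,…,x_n)^{sat J})`, and all four claims follow. -/

section Monomials

variable {N : ℕ} {J : Set (Mon N)}

lemma mdeg_eq_degree (u : Mon N) : mdeg u = u.degree := rfl

lemma subset_msat (J : Set (Mon N)) : J ⊆ msat J :=
  fun u hu => ⟨0, fun d hd => by rwa [(Finsupp.degree_eq_zero_iff d).mp hd, add_zero]⟩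

lemma MonIdeal.exists_msatiety_bound (hJ : MonIdeal J) :
    ∃ m, ∀ u : Mon N, m ≤ mdeg u → (u ∈ J ↔ u ∈ msat J) := by
  classical
  have hmin : {v | Minimal (· ∈ msat J) v}.Finite :=
    WellQuasiOrderedLE.finite_of_isAntichain (setOfPred_minimal_antichain _)
  choose! k hk using fun v (hv : v ∈ msat J) => hv
  refine ⟨hmin.toFinset.sup fun v => mdeg v + k v,
    fun u hu => ⟨(subset_msat J ·), fun hu' => ?_⟩⟩
  obtain ⟨v, hvu, hv⟩ := exists_minimal_le_of_wellFoundedLT (· ∈ msat J) u hu'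
  have hdeg : mdeg v + k v ≤ mdeg u := (Finset.le_sup (hmin.mem_toFinset.mpr hv)).trans hu
  have hsplit : u = v + (u - v) := (add_tsub_cancel_of_le hvu).symm
  obtain ⟨d, hdle, hd⟩ := Finsupp.exists_le_degree_eq (u - v) (k v) <| by
    rw [hsplit] at hdeg
    simp only [mdeg_eq_degree, map_add] at hdeg
    exact le_of_add_le_add_left hdeg
  have := hJ _ (hk v hv.prop d hd) (u - v - d)
  rwa [add_assoc, add_tsub_cancel_of_le hdle, ← hsplit] at this

lemma MonIdeal.mem_iff_mem_msat (hJ : MonIdeal J) {u : Mon N} (hu : msatiety J ≤ mdeg u) :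
    u ∈ J ↔ u ∈ msat J :=
  Nat.sInf_mem hJ.exists_msatiety_bound u hu

lemma msatiety_eq_zero (hJ : J = msat J) : msatiety J = 0 :=
  Nat.sInf_eq_zero.mpr <| Or.inl fun u _ => by rw [← hJ]

end Monomials

section StronglyStable

variable {n : ℕ} {J : Set (Mon (n + 1))}

lemma StronglyStable.add_single_mem_of_add_single_zero_mem (hJ : StronglyStable J)
    {u : Mon (n + 1)} (hu : u + Finsupp.single 0 1 ∈ J) (i : Fin (n + 1)) :
    u + Finsupp.single i 1 ∈ J := by
  rcases eq_or_ne i 0 with rfl | hi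
  · exact hu
  · refine hJ.2 _ hu _ (.single ⟨0, i, Fin.pos_of_ne_zero hi, ?_⟩)
    rw [add_right_comm]

lemma StronglyStable.mem_of_add_single_zero_mem (hJ : StronglyStable J) {u : Mon (n + 1)}
    (hu : msatiety J ≤ mdeg u) (h : u + Finsupp.single 0 1 ∈ J) : u ∈ J := by
  refine (hJ.1.mem_iff_mem_msat hu).mpr ⟨1, fun d hd => ?_⟩
  obtain ⟨i, rfl⟩ := (Finsupp.sum_eq_one_iff d).mp hd
  exact hJ.add_single_mem_of_add_single_zero_mem h i

end StronglyStable

section Saturation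

variable {K : Type} [Field K] {N : ℕ} {I : Ideal (MvPolynomial (Fin N) K)}
  {p : MvPolynomial (Fin N) K}

lemma mem_satIdeal_iff :
    p ∈ satIdeal K I ↔
      ∃ k, p ∈ I.colon (irrel K N ^ k : Ideal (MvPolynomial (Fin N) K)) := by
  refine Submodule.mem_iSup_of_directed _ (Monotone.directed_le fun a b hab => ?_)
  exact Submodule.colon_mono le_rfl (Ideal.pow_le_pow_right hab)

lemma le_satIdeal : I ≤ satIdeal K I :=
  le_iSup_of_le 0 (by rw [pow_zero, Ideal.one_eq_top, Submodule.top_coe, Submodule.colon_univ])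

lemma exists_X_pow_mul_mem_of_mem_satIdeal (i : Fin N) (hp : p ∈ satIdeal K I) :
    ∃ k, X i ^ k * p ∈ I := by
  obtain ⟨k, hk⟩ := mem_satIdeal_iff.mp hp
  have hXk : X i ^ k ∈ irrel K N ^ k :=
    Ideal.pow_mem_pow (Ideal.subset_span (Set.mem_range_self i)) k
  exact ⟨k, mul_comm p (X i ^ k) ▸ Submodule.mem_colon.mp hk _ hXk⟩

end Saturation

section Graded

variable {σ R : Type*} [CommSemiring R]

attribute [local instance] MvPolynomial.gradedAlgebra in
lemma homogeneousComponent_X_pow_mul (i : σ) (k d : ℕ) (p : MvPolynomial σ R) :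
    homogeneousComponent (k + d) (X i ^ k * p) = X i ^ k * homogeneousComponent d p := by
  simp only [← decomposition.decompose'_apply]
  exact DirectSum.coe_decompose_mul_add_of_left_mem (homogeneousSubmodule σ R)
    (isHomogeneous_X_pow i k)

end Graded

namespace MemMf

variable {K : Type} [Field K] {N : ℕ} {J : Set (Mon N)} {I : Ideal (MvPolynomial (Fin N) K)}

lemma exists_sub_mem (hI : MemMf K J I) (p : MvPolynomial (Fin N) K) :
    ∃ r ∈ restrictSupport K Jᶜ, p - r ∈ I := by
  obtain ⟨c, hc⟩ := Finsupp.mem_span_range_iff_exists_finsupp.mp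
    (hI.2.2 (Submodule.mem_top (x := Ideal.Quotient.mk I p)))
  refine ⟨c.sum fun u a => a • mono K u.1, ?_, ?_⟩
  · exact Submodule.finsuppSum_mem _ _ _ _ fun u _ =>
      Submodule.smul_mem _ _ ((monomial_mem_restrictSupport K).mpr (.inl u.2))
  · rw [← Ideal.Quotient.eq, ← hc, map_finsuppSum]
    simp only [← Ideal.Quotient.mkₐ_eq_mk K, map_smul]

lemma eq_zero_of_mem (hI : MemMf K J I) {r : MvPolynomial (Fin N) K}
    (hr : r ∈ restrictSupport K Jᶜ) (hrI : r ∈ I) : r = 0 := by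
  classical
  have hsum : ∑ u ∈ r.support.subtype (· ∉ J),
      coeff u.1 r • Ideal.Quotient.mk I (mono K u.1) = 0 := by
    rw [Finset.sum_subtype_of_mem (fun u => coeff u r • Ideal.Quotient.mk I (mono K u))
      (s := r.support) (p := (· ∉ J)) fun u hu => (mem_restrictSupport_iff K).mp hr hu]
    simp only [← Ideal.Quotient.mkₐ_eq_mk K, ← map_smul, ← map_sum, mono,
      smul_eq_mul, mul_one, support_sum_monomial_coeff]
    exact Ideal.Quotient.eq_zero_iff_mem.mpr hrI
  have hcoeff := linearIndependent_iff'.mp hI.2.1 _ _ hsum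
  ext u
  by_contra hu
  have hu' : u ∈ r.support := mem_support_iff.mpr hu
  exact hu (hcoeff ⟨u, hr hu'⟩ (Finset.mem_subtype.mpr hu'))

lemma exists_sub_mem_of_isHomogeneous (hI : MemMf K J I) {p : MvPolynomial (Fin N) K} {s : ℕ}
    (hp : p.IsHomogeneous s) :
    ∃ r ∈ restrictSupport K Jᶜ, r.IsHomogeneous s ∧ p - r ∈ I := by
  obtain ⟨r, hr, hpr⟩ := hI.exists_sub_mem p
  refine ⟨homogeneousComponent s r, ?_, homogeneousComponent_isHomogeneous s r, ?_⟩
  · rw [mem_restrictSupport_iff, support_homogeneousComponent]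
    exact (Finset.coe_subset.mpr (Finset.filter_subset _ _)).trans hr
  · simpa [homogeneousComponent_eq_self hp] using hI.1 _ hpr s

end MemMf

namespace MemMf

variable {K : Type} [Field K] {n : ℕ} {J : Set (Mon (n + 1))}
  {I : Ideal (MvPolynomial (Fin (n + 1)) K)}

lemma mem_of_X_zero_mul_mem (hI : MemMf K J I) {s : ℕ}
    (hJ : ∀ u : Mon (n + 1), mdeg u = s → u + Finsupp.single 0 1 ∈ J → u ∈ J)
    {p : MvPolynomial (Fin (n + 1)) K} (hp : p.IsHomogeneous s) (h : X 0 * p ∈ I) : p ∈ I := by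
  obtain ⟨r, hr, hrs, hpr⟩ := hI.exists_sub_mem_of_isHomogeneous hp
  have hxr : X 0 * r ∈ I := by
    simpa [mul_sub] using I.sub_mem h (I.mul_mem_left (X 0) hpr)
  have hxr' : X 0 * r ∈ restrictSupport K Jᶜ := by
    rw [mem_restrictSupport_iff, support_X_mul]
    intro v hv
    obtain ⟨u, hu, rfl⟩ := Finset.mem_map.mp hv
    intro huJ
    refine hr hu (hJ u (hrs.degree_eq_sum_deg_support hu).symm ?_)
    simpa [add_comm] using huJ
  have hr0 : r = 0 :=
    (mul_eq_zero.mp (hI.eq_zero_of_mem hxr' hxr)).resolve_left (X_ne_zero 0)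
  simpa [hr0] using hpr

lemma mem_of_X_zero_pow_mul_mem (hI : MemMf K J I) (hJ : StronglyStable J) {k s : ℕ}
    {p : MvPolynomial (Fin (n + 1)) K} (hp : p.IsHomogeneous s) (hs : msatiety J ≤ s)
    (h : X 0 ^ k * p ∈ I) : p ∈ I := by
  induction k generalizing p s with
  | zero => simpa using h
  | succ k ih =>
    have hx : X 0 * p ∈ I :=
      ih ((isHomogeneous_X K 0).mul hp) (hs.trans (Nat.le_add_left s 1))
        (by rwa [← mul_assoc, ← pow_succ])
    exact hI.mem_of_X_zero_mul_mem (fun u hu => hJ.mem_of_add_single_zero_mem (hu ▸ hs)) hp hx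

lemma mem_of_X_zero_pow_mul_mem_of_mem_irrel_pow (hI : MemMf K J I) (hJ : StronglyStable J)
    {k : ℕ} {p : MvPolynomial (Fin (n + 1)) K} (hp : p ∈ irrel K (n + 1) ^ msatiety J)
    (h : X 0 ^ k * p ∈ I) : p ∈ I := by
  rw [← sum_homogeneousComponent p]
  refine I.sum_mem fun d _ => ?_
  by_cases hd : msatiety J ≤ d
  · refine hI.mem_of_X_zero_pow_mul_mem hJ (homogeneousComponent_isHomogeneous d p) hd
      (k := k) ?_
    rw [← homogeneousComponent_X_pow_mul]
    exact hI.1 _ h _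
  · rw [homogeneousComponent_eq_zero' _ _ fun u hu => ?_]
    · exact I.zero_mem
    · have := (mem_pow_idealOfVars_iff _ p).mp hp u hu
      omega

lemma mem_satIdeal_of_X_zero_pow_mul_mem (hI : MemMf K J I) (hJ : StronglyStable J) {k : ℕ}
    {p : MvPolynomial (Fin (n + 1)) K} (h : X 0 ^ k * p ∈ I) : p ∈ satIdeal K I := by
  refine mem_satIdeal_iff.mpr ⟨msatiety J, Submodule.mem_colon.mpr fun z hz => ?_⟩
  rw [smul_eq_mul]
  refine hI.mem_of_X_zero_pow_mul_mem_of_mem_irrel_pow hJ (Ideal.mul_mem_left _ p hz)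
    (k := k) ?_
  rw [mul_comm p, mul_left_comm]
  exact I.mul_mem_left z h

end MemMf

/-- for `I ∈ Mf(J)` with `J` strongly stable: `x_0` is a nonzero
divisor on `S/I^sat`, `sat I ≤ sat J`, if `J` is saturated then so is `I`,
and `(I : x_0^∞) = I^sat`. -/
theorem markedFamily_satiety {n : ℕ} (K : Type) [Field K]
    (J : Set (Mon (n + 1))) (I : Ideal (MvPolynomial (Fin (n + 1)) K))
    (hss : StronglyStable J) (hI : MemMf K J I) :
    (∀ p : MvPolynomial (Fin (n + 1)) K,
        MvPolynomial.X 0 * p ∈ satIdeal K I → p ∈ satIdeal K I) ∧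
    satiety K I ≤ msatiety J ∧
    (J = msat J → I = satIdeal K I) ∧
    (∀ p : MvPolynomial (Fin (n + 1)) K,
        (∃ k : ℕ, MvPolynomial.X 0 ^ k * p ∈ I) ↔ p ∈ satIdeal K I) := by
  have colon_eq : ∀ p : MvPolynomial (Fin (n + 1)) K,
      (∃ k : ℕ, X 0 ^ k * p ∈ I) ↔ p ∈ satIdeal K I := fun p =>
    ⟨fun ⟨_, h⟩ => hI.mem_satIdeal_of_X_zero_pow_mul_mem hss h,
      exists_X_pow_mul_mem_of_mem_satIdeal 0⟩
  refine ⟨fun p hp => ?_, Nat.sInf_le fun t ht p hp => ⟨(le_satIdeal ·), fun hpI => ?_⟩,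
    fun hJ => le_antisymm le_satIdeal fun p hp => ?_, colon_eq⟩
  · obtain ⟨k, hk⟩ := (colon_eq _).mpr hp
    exact (colon_eq p).mp ⟨k + 1, by rwa [pow_succ, mul_assoc]⟩
  · obtain ⟨k, hk⟩ := exists_X_pow_mul_mem_of_mem_satIdeal 0 hpI
    exact hI.mem_of_X_zero_pow_mul_mem hss hp ht hk
  · obtain ⟨k, hk⟩ := exists_X_pow_mul_mem_of_mem_satIdeal 0 hp
    refine hI.mem_of_X_zero_pow_mul_mem_of_mem_irrel_pow hss ?_ hk
    simp [msatiety_eq_zero hJ]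

end Paper
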